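/- arXiv:0712.4322 — 3 statements merged into one kernel-verified Lean document; each statement's English description precedes it below -/
import Mathlib

section
/- Let D ≥ 1 be a natural number. The number of lattice points with all coordinates positive integers lying in the ball of radius √R, i.e. the cardinality of {n ∈ (ℤ₊)^D : n₁² + ⋯ + n_D² ≤ R}, is asymptotically equal to (1/2^D) · (π^{D/2} / Γ(D/2 + 1)) · R^{D/2} as R → ∞; that is, the ratio of the count to this expression tends to 1. -/
/-!
Attach to each counted point `n` the unit cube `∏ [nᵢ - 1, nᵢ)`. These cubes are disjoint, so
their union has volume equal to the count; it lies in the positive-orthant part of the ball of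
radius `√R`, and by Minkowski's inequality it contains the orthant part of the ball of radius
`√R - √D`. The orthant part of a ball has `2⁻ᴰ` times its volume, since the `2ᴰ` coordinate
reflections of it tile the ball up to null sets; so both bounds are `(1 + o(1))` times
`2⁻ᴰ π^{D/2} R^{D/2} / Γ(D/2 + 1)`.
-/

open Filter MeasureTheory Set Topology

section Reflection

variable {ι : Type*}

def reflectCoords (ε : ι → Bool) (x : ι → ℝ) : ι → ℝ :=
  fun i => if ε i then -x i else x i

lemma reflectCoords_apply_sq (ε : ι → Bool) (x : ι → ℝ) (i : ι) :
    reflectCoords ε x i ^ 2 = x i ^ 2 := by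
  by_cases h : ε i <;> simp [reflectCoords, h]

variable [Fintype ι]

lemma measurePreserving_reflectCoords (ε : ι → Bool) :
    MeasurePreserving (reflectCoords ε) volume volume := by
  refine measurePreserving_pi (fun _ : ι => (volume : Measure ℝ)) (fun _ => volume)
    (f := fun i t => if ε i then -t else t) fun i => ?_
  cases ε i
  · exact MeasurePreserving.id _
  · exact Measure.measurePreserving_neg _

lemma volume_eq_two_pow_card_mul_volume_inter_Ici {A : Set (ι → ℝ)} (hA : MeasurableSet A)
    (hsymm : ∀ ε, reflectCoords ε ⁻¹' A = A) :
    volume A = 2 ^ Fintype.card ι * volume (A ∩ Ici 0) := by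
  classical
  set P := A ∩ Ici 0
  have hP : MeasurableSet P := hA.inter measurableSet_Ici
  have hcover : A = ⋃ ε, reflectCoords ε ⁻¹' P := by
    refine (iUnion_subset fun ε => ?_).antisymm' fun x hx => ?_
    · rw [← hsymm ε]
      exact preimage_mono inter_subset_left
    · refine mem_iUnion.2 ⟨fun i => decide (x i < 0), by rwa [← mem_preimage, hsymm], fun i => ?_⟩
      by_cases h : x i < 0 <;> simp [reflectCoords, h] <;> linarith
  -- Two different reflections of `P` can only meet where some coordinate vanishes.
  have hdisj : Pairwise (Function.onFun (AEDisjoint volume) fun ε => reflectCoords ε ⁻¹' P) := by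
    intro ε δ hne
    obtain ⟨i, hi⟩ := Function.ne_iff.1 hne
    refine measure_mono_null (fun x hx => ?_) (Measure.pi_hyperplane _ i 0)
    have h₁ := hx.1.2 i
    have h₂ := hx.2.2 i
    simp only [reflectCoords, Pi.zero_apply] at h₁ h₂
    show x i = 0
    cases hε : ε i <;> cases hδ : δ i <;> simp_all <;> linarith
  rw [hcover, measure_iUnion₀ hdisj fun ε =>
      (hP.preimage (measurePreserving_reflectCoords ε).measurable).nullMeasurableSet,
    tsum_fintype]
  simp only [(measurePreserving_reflectCoords _).measure_preimage hP.nullMeasurableSet,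
    Finset.sum_const, Finset.card_univ, Fintype.card_fun, Fintype.card_bool, nsmul_eq_mul]
  norm_cast

end Reflection

section OrthantBall

variable {ι : Type*} [Fintype ι]

lemma volume_sum_sq_le [Nonempty ι] {r : ℝ} (hr : 0 ≤ r) :
    volume {x : ι → ℝ | ∑ i, x i ^ 2 ≤ r ^ 2} = ENNReal.ofReal r ^ Fintype.card ι *
      ENNReal.ofReal (√Real.pi ^ Fintype.card ι / Real.Gamma (Fintype.card ι / 2 + 1)) := by
  rw [← EuclideanSpace.volume_closedBall ι 0 r, EuclideanSpace.closedBall_zero_eq r hr,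
    ← (PiLp.volume_preserving_toLp ι).measure_preimage
      (measurableSet_le (by fun_prop) measurable_const).nullMeasurableSet]
  rfl

variable (ι) in
def orthantBall (r : ℝ) : Set (ι → ℝ) := {x | ∑ i, x i ^ 2 ≤ r ^ 2} ∩ Ici 0

variable (ι) in
noncomputable def orthantBallCoeff : ℝ :=
  1 / 2 ^ Fintype.card ι * (√Real.pi ^ Fintype.card ι / Real.Gamma (Fintype.card ι / 2 + 1))

lemma orthantBallCoeff_pos : 0 < orthantBallCoeff ι := by
  have := Real.Gamma_pos_of_pos (by positivity : (0 : ℝ) < Fintype.card ι / 2 + 1)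
  unfold orthantBallCoeff
  positivity

lemma volume_orthantBall [Nonempty ι] {r : ℝ} (hr : 0 ≤ r) :
    volume (orthantBall ι r) = ENNReal.ofReal (orthantBallCoeff ι * r ^ Fintype.card ι) := by
  have hball := volume_eq_two_pow_card_mul_volume_inter_Ici
    (measurableSet_le (by fun_prop) measurable_const :
      MeasurableSet {x : ι → ℝ | ∑ i, x i ^ 2 ≤ r ^ 2})
    fun ε => by
      ext x
      simp only [mem_preimage, mem_ofPred_eq, reflectCoords_apply_sq]
  rw [volume_sum_sq_le hr] at hball
  rw [orthantBall, ← ENNReal.mul_right_inj (pow_ne_zero _ two_ne_zero)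
      (ENNReal.pow_ne_top ENNReal.ofNat_ne_top), ← hball, ← ENNReal.ofReal_pow hr,
    ← ENNReal.ofReal_mul (by positivity),
    show (2 : ENNReal) ^ Fintype.card ι = ENNReal.ofReal (2 ^ Fintype.card ι) by simp,
    ← ENNReal.ofReal_mul (by positivity), orthantBallCoeff]
  congr 1
  field_simp

end OrthantBall

section LatticePoints

variable {ι : Type*}

def unitCubeBelow (n : ι → ℕ+) : Set (ι → ℝ) :=
  pi univ fun i => Ico (((n i : ℕ) : ℝ) - 1) ((n i : ℕ) : ℝ)

lemma eq_of_mem_unitCubeBelow {n m : ι → ℕ+} {x : ι → ℝ} (hn : x ∈ unitCubeBelow n)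
    (hm : x ∈ unitCubeBelow m) : n = m := by
  funext i
  obtain ⟨hn₁, hn₂⟩ := hn i trivial
  obtain ⟨hm₁, hm₂⟩ := hm i trivial
  have h₁ : (n i : ℕ) < m i + 1 := by
    exact_mod_cast (by linarith : ((n i : ℕ) : ℝ) < (m i : ℕ) + 1)
  have h₂ : (m i : ℕ) < n i + 1 := by
    exact_mod_cast (by linarith : ((m i : ℕ) : ℝ) < (n i : ℕ) + 1)
  exact PNat.eq (by omega)

variable [Fintype ι]

variable (ι) in
def posLatticePoints (R : ℝ) : Set (ι → ℕ+) := {n | ∑ i, ((n i : ℕ) : ℝ) ^ 2 ≤ R}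

lemma volume_biUnion_unitCubeBelow (T : Finset (ι → ℕ+)) :
    volume (⋃ n ∈ T, unitCubeBelow n) = T.card := by
  rw [measure_biUnion_finset
    (fun n _ m _ hnm => disjoint_left.2 fun _ hn hm => hnm (eq_of_mem_unitCubeBelow hn hm))
    fun n _ => MeasurableSet.univ_pi fun _ => measurableSet_Ico]
  simp [unitCubeBelow, volume_pi_pi]

lemma finite_posLatticePoints (R : ℝ) : (posLatticePoints ι R).Finite := by
  refine (Set.Finite.pi' fun _ => Set.finite_Iic ⌊R⌋₊.succPNat).subset fun n hn i => ?_
  have hsq : ((n i : ℕ) : ℝ) ^ 2 ≤ R :=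
    (Finset.single_le_sum (fun j _ => sq_nonneg ((n j : ℕ) : ℝ)) (Finset.mem_univ i)).trans hn
  have hle : ((n i : ℕ) : ℝ) ≤ R := by
    have : (1 : ℝ) ≤ (n i : ℕ) := by exact_mod_cast (n i).pos
    nlinarith
  rw [mem_Iic, ← PNat.coe_le_coe, Nat.succPNat_coe]
  exact (Nat.le_floor hle).trans (Nat.le_succ _)

lemma natCard_posLatticePoints_eq_volume (R : ℝ) :
    (Nat.card (posLatticePoints ι R) : ENNReal) =
      volume (⋃ n ∈ posLatticePoints ι R, unitCubeBelow n) := by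
  have hfin := finite_posLatticePoints (ι := ι) R
  rw [Nat.card_coe_set_eq, Set.ncard_eq_toFinset_card _ hfin, ← volume_biUnion_unitCubeBelow]
  simp

lemma unitCubeBelow_subset_orthantBall {R : ℝ} {n : ι → ℕ+} (hn : n ∈ posLatticePoints ι R) :
    unitCubeBelow n ⊆ orthantBall ι √R := by
  intro x hx
  have hx₀ : 0 ≤ x := fun i => by
    show 0 ≤ x i
    have : (1 : ℝ) ≤ (n i : ℕ) := by exact_mod_cast (n i).pos
    linarith [(hx i trivial).1]
  refine ⟨?_, hx₀⟩
  rw [mem_ofPred_eq, Real.sq_sqrt ((Finset.sum_nonneg fun i _ => sq_nonneg _).trans hn)]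
  exact (Finset.sum_le_sum fun i _ => pow_le_pow_left₀ (hx₀ i) (hx i trivial).2.le 2).trans hn

lemma sum_add_one_sq_le (x : ι → ℝ) :
    ∑ i, (x i + 1) ^ 2 ≤ (√(∑ i, x i ^ 2) + √(Fintype.card ι)) ^ 2 := by
  have h := norm_add_le (WithLp.toLp 2 x : EuclideanSpace ℝ ι) (WithLp.toLp 2 1)
  simp only [← WithLp.toLp_add, EuclideanSpace.norm_eq, Real.norm_eq_abs, sq_abs, Pi.add_apply,
    Pi.one_apply, one_pow, Finset.sum_const, Finset.card_univ, nsmul_eq_mul, mul_one] at h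
  exact (Real.sqrt_le_left (by positivity)).1 h

lemma orthantBall_subset_biUnion_unitCubeBelow {r R : ℝ} (hr : 0 ≤ r)
    (hR : (r + √(Fintype.card ι)) ^ 2 ≤ R) :
    orthantBall ι r ⊆ ⋃ n ∈ posLatticePoints ι R, unitCubeBelow n := by
  rintro x ⟨hxr, hx₀⟩
  set n : ι → ℕ+ := fun i => ⌊x i⌋₊.succPNat
  have hn : ∀ i, ((n i : ℕ) : ℝ) = ⌊x i⌋₊ + 1 := fun i => by simp [n]
  have hxn : x ∈ unitCubeBelow n := fun i _ => by
    show x i ∈ Ico _ _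
    rw [hn, add_sub_cancel_right]
    exact ⟨Nat.floor_le (hx₀ i), Nat.lt_floor_add_one _⟩
  refine mem_biUnion (x := n) ?_ hxn
  calc ∑ i, ((n i : ℕ) : ℝ) ^ 2 ≤ ∑ i, (x i + 1) ^ 2 := by
        refine Finset.sum_le_sum fun i _ => pow_le_pow_left₀ (by positivity) ?_ 2
        rw [hn]
        linarith [Nat.floor_le (hx₀ i)]
    _ ≤ (√(∑ i, x i ^ 2) + √(Fintype.card ι)) ^ 2 := sum_add_one_sq_le x
    _ ≤ (r + √(Fintype.card ι)) ^ 2 := by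
        gcongr
        exact (Real.sqrt_le_left hr).2 hxr
    _ ≤ R := hR

lemma natCard_posLatticePoints_le [Nonempty ι] (R : ℝ) :
    (Nat.card (posLatticePoints ι R) : ℝ) ≤ orthantBallCoeff ι * √R ^ Fintype.card ι := by
  have h : (Nat.card (posLatticePoints ι R) : ENNReal) ≤ volume (orthantBall ι √R) := by
    rw [natCard_posLatticePoints_eq_volume]
    exact measure_mono (iUnion₂_subset fun n hn => unitCubeBelow_subset_orthantBall hn)
  rw [volume_orthantBall (Real.sqrt_nonneg R)] at h
  exact_mod_cast ENNReal.toReal_le_of_le_ofReal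
    (mul_nonneg orthantBallCoeff_pos.le (by positivity)) h

lemma le_natCard_posLatticePoints [Nonempty ι] {r R : ℝ} (hr : 0 ≤ r)
    (hR : (r + √(Fintype.card ι)) ^ 2 ≤ R) :
    orthantBallCoeff ι * r ^ Fintype.card ι ≤ Nat.card (posLatticePoints ι R) := by
  have h : volume (orthantBall ι r) ≤ Nat.card (posLatticePoints ι R) := by
    rw [natCard_posLatticePoints_eq_volume]
    exact measure_mono (orthantBall_subset_biUnion_unitCubeBelow hr hR)
  rw [volume_orthantBall hr] at h
  exact_mod_cast (ENNReal.ofReal_le_iff_le_toReal (ENNReal.natCast_ne_top _)).1 h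

theorem tendsto_natCard_posLatticePoints_div [Nonempty ι] :
    Tendsto (fun R => Nat.card (posLatticePoints ι R) /
      (orthantBallCoeff ι * √R ^ Fintype.card ι)) atTop (𝓝 1) := by
  set k := Fintype.card ι
  have hlower : Tendsto (fun R => (1 - √k / √R) ^ k) atTop (𝓝 1) := by
    simpa using ((tendsto_const_nhds.div_atTop Real.tendsto_sqrt_atTop).const_sub 1).pow k
  refine tendsto_of_tendsto_of_tendsto_of_le_of_le' hlower tendsto_const_nhds ?_ ?_ <;>
    filter_upwards [eventually_ge_atTop (k : ℝ)] with R hR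
  · have hk : (0 : ℝ) < k := by exact_mod_cast Fintype.card_pos
    have hRpos : 0 < √R := Real.sqrt_pos.2 (hk.trans_le hR)
    calc (1 - √k / √R) ^ k
        = orthantBallCoeff ι * (√R - √k) ^ k / (orthantBallCoeff ι * √R ^ k) := by
          rw [mul_div_mul_left _ _ orthantBallCoeff_pos.ne', ← div_pow, sub_div,
            div_self hRpos.ne']
      _ ≤ _ := div_le_div_of_nonneg_right
          (le_natCard_posLatticePoints (sub_nonneg.2 (Real.sqrt_le_sqrt hR))
            (by rw [sub_add_cancel, Real.sq_sqrt (hk.le.trans hR)]))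
          (mul_nonneg orthantBallCoeff_pos.le (by positivity))
  · exact div_le_one_of_le₀ (natCard_posLatticePoints_le R)
      (mul_nonneg orthantBallCoeff_pos.le (by positivity))

end LatticePoints

/-- Weyl's law in lattice-counting form: the number of points of `(ℤ₊)^D` in the
ball of radius `√R` is asymptotic to `(1/2^D) · (π^{D/2}/Γ(D/2+1)) · R^{D/2}`. -/
theorem weyl_lattice_count (D : ℕ) (hD : 1 ≤ D) :
    Tendsto (fun R : ℝ =>
      (Nat.card {n : Fin D → ℕ+ // ∑ i, ((n i : ℕ) : ℝ) ^ 2 ≤ R} : ℝ) /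
        ((1 / 2 ^ D) * (Real.pi ^ ((D : ℝ) / 2) / Real.Gamma ((D : ℝ) / 2 + 1)) *
          R ^ ((D : ℝ) / 2)))
      atTop (nhds 1) := by
  have : Nonempty (Fin D) := ⟨⟨0, hD⟩⟩
  refine (tendsto_natCard_posLatticePoints_div (ι := Fin D)).congr' ?_
  filter_upwards [eventually_ge_atTop 0] with R hR
  simp only [orthantBallCoeff, Fintype.card_fin, Real.rpow_div_two_eq_sqrt _ hR,
    Real.rpow_div_two_eq_sqrt _ Real.pi_pos.le, Real.rpow_natCast]
  rfl
end

section
/- Fix a dimension D ≥ 1, real constants ℏ > 0, m > 0, L > 0, a half-integer spin s ≥ 0, and set V = L^D. Define the level counting function N(E) = (2s+1) · #{n ∈ (ℤ₊)^D : (ℏ²π²/(2mL²))(n₁² + ⋯ + n_D²) ≤ E}. Then N(E) is asymptotically equal to (2s+1) · C_D · V · E^{D/2} as E → ∞, where C_D = (1/Γ(D/2+1)) · (m/(2πℏ²))^{D/2}; that is, N(E) / ((2s+1) C_D V E^{D/2}) → 1 as E → ∞. -/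
/-!
With `c = ℏ²π²/(2mL²)` and `R = √(E / c)`, the levels below `E` are the points of `ℕ+^D` in the
ball of radius `R`; scaled by `R⁻¹` they are the points of the lattice `R⁻¹ ℤ^D` in the convex set
`Q` cut out of the Euclidean unit ball by the open positive orthant. A convex bounded set has a null frontier, so the
Riemann-sum count of lattice points gives `#(Q ∩ R⁻¹ ℤ^D) ~ vol(Q) R^D`. The `2^D` coordinate sign
flips move `Q` onto disjoint pieces covering the unit ball up to the coordinate hyperplanes, so
`vol(Q) = π^{D/2} / (2^D Γ(D/2+1))`, and `vol(Q) R^D` is exactly `C_D V E^{D/2}`.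
-/

open MeasureTheory Filter Topology Real
open scoped Pointwise

section

variable {ι : Type*}

def signFlip (ε : ι → ℤˣ) (y : ι → ℝ) : ι → ℝ := fun i => (ε i : ℝ) * y i

lemma signFlip_signFlip (ε : ι → ℤˣ) (y : ι → ℝ) : signFlip ε (signFlip ε y) = y := by
  ext i
  rcases Int.units_eq_one_or (ε i) with h | h <;> simp [signFlip, h]

variable [Fintype ι]

lemma measurePreserving_signFlip (ε : ι → ℤˣ) : MeasurePreserving (signFlip ε) := by
  refine measurePreserving_pi (fun _ => volume) (fun _ => volume) fun i => ?_
  rcases Int.units_eq_one_or (ε i) with h | h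
  · convert MeasurePreserving.id (volume : Measure ℝ) using 1
    ext; simp [h]
  · convert Measure.measurePreserving_neg (volume : Measure ℝ) using 1
    ext; simp [h]

lemma volume_setOf_apply_eq_zero (i : ι) : volume {y : ι → ℝ | y i = 0} = 0 := by
  classical
  refine Measure.addHaar_submodule volume
    (LinearMap.ker (LinearMap.proj i : (ι → ℝ) →ₗ[ℝ] ℝ)) fun h => ?_
  simpa using congr($(LinearMap.ker_eq_top.mp h) (Pi.single i (1 : ℝ)))

lemma volume_eq_two_pow_mul_volume_inter_orthant {S : Set (ι → ℝ)} (hS : MeasurableSet S)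
    (hS_flip : ∀ ε, ∀ y ∈ S, signFlip ε y ∈ S) :
    volume S = 2 ^ Fintype.card ι * volume (S ∩ Set.univ.pi fun _ => Set.Ioi 0) := by
  classical
  set P : Set (ι → ℝ) := Set.univ.pi fun _ => Set.Ioi 0
  have hmeas : MeasurableSet (S ∩ P) := hS.inter (.univ_pi fun _ => measurableSet_Ioi)
  have hdisjoint : Pairwise (Function.onFun Disjoint fun ε => signFlip ε ⁻¹' (S ∩ P)) := by
    refine fun ε ε' hne => Set.disjoint_left.mpr fun y hy hy' => hne (funext fun i => ?_)
    have h : 0 < (ε i : ℝ) * y i := hy.2 i trivial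
    have h' : 0 < (ε' i : ℝ) * y i := hy'.2 i trivial
    rcases Int.units_eq_one_or (ε i) with hε | hε <;>
      rcases Int.units_eq_one_or (ε' i) with hε' | hε' <;> simp_all <;> linarith
  have hcover : S ⊆ (⋃ ε, signFlip ε ⁻¹' (S ∩ P)) ∪ ⋃ i, {y | y i = 0} := by
    intro y hy
    by_cases hy0 : ∃ i, y i = 0
    · exact Or.inr (Set.mem_iUnion.mpr hy0)
    push Not at hy0
    refine Or.inl (Set.mem_iUnion.mpr
      ⟨fun i => if 0 < y i then 1 else -1, hS_flip _ _ hy, fun i _ => ?_⟩)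
    rcases (hy0 i).lt_or_gt with h | h <;> simp [signFlip, h, h.not_gt]
  calc volume S = volume (⋃ ε, signFlip ε ⁻¹' (S ∩ P)) := by
        refine le_antisymm ?_ (measure_mono (Set.iUnion_subset fun ε y hy => ?_))
        · calc volume S
              ≤ volume (⋃ ε, signFlip ε ⁻¹' (S ∩ P)) + volume (⋃ i, {y : ι → ℝ | y i = 0}) :=
                (measure_mono hcover).trans (measure_union_le _ _)
            _ = _ := by rw [measure_iUnion_null volume_setOf_apply_eq_zero, add_zero]
        · exact signFlip_signFlip ε y ▸ hS_flip ε _ hy.1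
    _ = ∑ ε, volume (signFlip ε ⁻¹' (S ∩ P)) := by
        rw [measure_iUnion hdisjoint fun ε => (measurePreserving_signFlip ε).measurable hmeas,
          tsum_fintype]
    _ = 2 ^ Fintype.card ι * volume (S ∩ P) := by
        rw [Finset.sum_congr rfl fun ε _ =>
          (measurePreserving_signFlip ε).measure_preimage hmeas.nullMeasurableSet]
        simp

lemma setOf_sum_sq_le_one_eq_preimage_closedBall :
    {y : ι → ℝ | ∑ i, y i ^ 2 ≤ 1} = WithLp.toLp 2 ⁻¹' Metric.closedBall 0 1 := by
  ext y
  simp [EuclideanSpace.norm_eq]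

lemma volume_setOf_sum_sq_le_one [Nonempty ι] :
    volume {y : ι → ℝ | ∑ i, y i ^ 2 ≤ 1} =
      ENNReal.ofReal (√π ^ Fintype.card ι / Gamma (Fintype.card ι / 2 + 1)) := by
  rw [setOf_sum_sq_le_one_eq_preimage_closedBall,
    (PiLp.volume_preserving_toLp ι).measure_preimage measurableSet_closedBall.nullMeasurableSet,
    EuclideanSpace.volume_closedBall]
  simp

variable (ι) in
def positiveOrthantBall : Set (ι → ℝ) :=
  {y | ∑ i, y i ^ 2 ≤ 1} ∩ Set.univ.pi fun _ => Set.Ioi 0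

lemma measurableSet_positiveOrthantBall : MeasurableSet (positiveOrthantBall ι) :=
  (measurableSet_le (by fun_prop) measurable_const).inter (.univ_pi fun _ => measurableSet_Ioi)

lemma convex_positiveOrthantBall : Convex ℝ (positiveOrthantBall ι) := by
  refine Convex.inter ?_ (convex_pi fun _ _ => convex_Ioi 0)
  rw [setOf_sum_sq_le_one_eq_preimage_closedBall]
  exact (convex_closedBall 0 1).linear_preimage (WithLp.linearEquiv 2 ℝ (ι → ℝ)).symm.toLinearMap

lemma isBounded_positiveOrthantBall : Bornology.IsBounded (positiveOrthantBall ι) := by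
  refine (Metric.isBounded_closedBall (x := (0 : ι → ℝ)) (r := 1)).subset fun y hy => ?_
  rw [mem_closedBall_zero_iff, pi_norm_le_iff_of_nonneg zero_le_one]
  intro i
  rw [Real.norm_eq_abs, ← sq_le_one_iff_abs_le_one]
  exact (Finset.single_le_sum (fun j _ => sq_nonneg (y j)) (Finset.mem_univ i)).trans hy.1

lemma smul_positiveOrthantBall_subset_smul {a b : ℝ} (ha : 0 < a) (hab : a ≤ b) :
    a • positiveOrthantBall ι ⊆ b • positiveOrthantBall ι := by
  have hb : 0 < b := ha.trans_le hab
  have ht : 0 < a / b := div_pos ha hb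
  have ht1 : a / b ≤ 1 := (div_le_one hb).mpr hab
  rintro _ ⟨y, ⟨hy, hpos⟩, rfl⟩
  refine ⟨(a / b) • y, ⟨?_, fun i _ => mul_pos ht (hpos i trivial)⟩, ?_⟩
  · calc ∑ i, ((a / b) • y) i ^ 2 = (a / b) ^ 2 * ∑ i, y i ^ 2 := by
          simp [Finset.mul_sum, mul_pow]
      _ ≤ 1 := mul_le_one₀ (pow_le_one₀ ht.le ht1) (Finset.sum_nonneg fun _ _ => sq_nonneg _) hy
  · simp only [smul_smul, mul_div_cancel₀ a hb.ne']

lemma card_positiveOrthantBall_inter_inv_smul_span {R : ℝ} (hR : 0 < R) :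
    Nat.card ↑(positiveOrthantBall ι ∩
        R⁻¹ • (Submodule.span ℤ (Set.range (Pi.basisFun ℝ ι)) : Set (ι → ℝ))) =
      Nat.card {n : ι → ℕ+ | ∑ i, ((n i : ℕ) : ℝ) ^ 2 ≤ R ^ 2} := by
  have hinj : Function.Injective fun (n : ι → ℕ+) i => ((n i : ℕ) : ℝ) / R := by
    intro n n' h
    funext i
    have := congr_fun h i
    simp only [div_left_inj' hR.ne'] at this
    exact PNat.coe_injective (by exact_mod_cast this)
  rw [← Nat.card_image_of_injective hinj]
  congr 2
  ext y
  simp only [positiveOrthantBall, Set.mem_inter_iff, Set.mem_ofPred_eq, Set.mem_pi, Set.mem_univ,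
    true_implies, Set.mem_Ioi, Set.mem_image, Set.mem_inv_smul_set_iff₀ hR.ne', SetLike.mem_coe,
    Module.Basis.mem_span_iff_repr_mem ℤ (Pi.basisFun ℝ ι), Pi.basisFun_repr]
  constructor
  · rintro ⟨⟨hsum, hpos⟩, hlat⟩
    choose z hz using hlat
    replace hz (i : ι) : (z i : ℝ) = R * y i := by simpa using hz i
    have hz_pos (i : ι) : 0 < z i := by exact_mod_cast (hz i).symm ▸ mul_pos hR (hpos i)
    have hz_toNat (i : ι) : (((z i).toNat : ℕ) : ℝ) = R * y i := by
      rw [← hz, ← Int.cast_natCast, Int.toNat_of_nonneg (hz_pos i).le]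
    refine ⟨fun i => ⟨(z i).toNat, by have := hz_pos i; omega⟩, ?_, funext fun i => ?_⟩
    · simp only [PNat.mk_coe, hz_toNat, mul_pow, ← Finset.mul_sum]
      exact mul_le_of_le_one_right (sq_nonneg R) hsum
    · simp only [PNat.mk_coe, hz_toNat]
      field_simp
  · rintro ⟨n, hn, rfl⟩
    refine ⟨⟨?_, fun i => by positivity⟩, fun i => ⟨(n i : ℤ), by simp; field_simp⟩⟩
    simp only [div_pow, ← Finset.sum_div]
    exact (div_le_one (by positivity)).mpr hn

lemma volume_positiveOrthantBall [Nonempty ι] :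
    volume (positiveOrthantBall ι) = ENNReal.ofReal
      (√π ^ Fintype.card ι / Gamma (Fintype.card ι / 2 + 1) / 2 ^ Fintype.card ι) := by
  have h := volume_eq_two_pow_mul_volume_inter_orthant (S := {y : ι → ℝ | ∑ i, y i ^ 2 ≤ 1})
    (measurableSet_le (by fun_prop) measurable_const) fun ε y (hy : ∑ i, y i ^ 2 ≤ 1) => by
      show ∑ i, signFlip ε y i ^ 2 ≤ 1
      convert hy using 2 with i
      rw [signFlip]
      rcases Int.units_eq_one_or (ε i) with h | h <;> simp [h]
  rw [volume_setOf_sum_sq_le_one, ← positiveOrthantBall] at h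
  rw [ENNReal.ofReal_div_of_pos (by positivity), h, ENNReal.ofReal_pow zero_le_two,
    ENNReal.ofReal_ofNat, mul_comm, ENNReal.mul_div_cancel_right (by positivity) (by simp)]

theorem tendsto_card_pnat_sum_sq_le_div_pow [Nonempty ι] :
    Tendsto (fun R : ℝ => (Nat.card {n : ι → ℕ+ | ∑ i, ((n i : ℕ) : ℝ) ^ 2 ≤ R ^ 2} : ℝ) /
        R ^ Fintype.card ι) atTop
      (𝓝 (√π ^ Fintype.card ι / Gamma (Fintype.card ι / 2 + 1) / 2 ^ Fintype.card ι)) := by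
  have hvol : volume.real (positiveOrthantBall ι) =
      √π ^ Fintype.card ι / Gamma (Fintype.card ι / 2 + 1) / 2 ^ Fintype.card ι := by
    rw [measureReal_def, volume_positiveOrthantBall, ENNReal.toReal_ofReal (by positivity)]
  rw [← hvol]
  have hfrontier : volume (frontier (positiveOrthantBall ι)) = 0 :=
    Convex.addHaar_frontier (μ := volume) convex_positiveOrthantBall
  refine (tendsto_card_div_pow_atTop_volume' _ isBounded_positiveOrthantBall
    measurableSet_positiveOrthantBall hfrontier
    fun _ _ ha hab => smul_positiveOrthantBall_subset_smul ha hab).congr' ?_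
  filter_upwards [eventually_gt_atTop 0] with R hR
  rw [card_positiveOrthantBall_inter_inv_smul_span hR]

end

lemma sqrt_pow_eq_rpow_div_two {x : ℝ} (hx : 0 ≤ x) (n : ℕ) : √x ^ n = x ^ ((n : ℝ) / 2) := by
  rw [rpow_div_two_eq_sqrt _ hx, rpow_natCast]

lemma weyl_leading_term_eq (D : ℕ) {ℏ m L E : ℝ} (hℏ : 0 < ℏ) (hm : 0 < m) (hL : 0 < L)
    (hE : 0 ≤ E) :
    1 / Gamma ((D : ℝ) / 2 + 1) * (m / (2 * π * ℏ ^ 2)) ^ ((D : ℝ) / 2) * L ^ D *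
        E ^ ((D : ℝ) / 2) =
      √π ^ D / Gamma ((D : ℝ) / 2 + 1) / 2 ^ D * √(E / (ℏ ^ 2 * π ^ 2 / (2 * m * L ^ 2))) ^ D := by
  have hπ := pi_pos
  have hc : 0 < ℏ ^ 2 * π ^ 2 / (2 * m * L ^ 2) := by positivity
  have h4 : (4 : ℝ) ^ ((D : ℝ) / 2) = 2 ^ D := by
    rw [← sqrt_pow_eq_rpow_div_two (by norm_num), show (4 : ℝ) = 2 ^ 2 by norm_num,
      sqrt_sq zero_le_two]
  calc _ = (m / (2 * π * ℏ ^ 2) * L ^ 2 * E) ^ ((D : ℝ) / 2) / Gamma ((D : ℝ) / 2 + 1) := by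
        rw [mul_rpow (by positivity) hE, mul_rpow (by positivity) (by positivity),
          ← sqrt_pow_eq_rpow_div_two (sq_nonneg L), sqrt_sq hL.le]
        ring
    _ = (π / 4 * (E / (ℏ ^ 2 * π ^ 2 / (2 * m * L ^ 2)))) ^ ((D : ℝ) / 2) /
          Gamma ((D : ℝ) / 2 + 1) := by
        congr 2
        field_simp
        ring
    _ = _ := by
        rw [mul_rpow (by positivity) (div_nonneg hE hc.le), div_rpow hπ.le (by norm_num), h4,
          ← sqrt_pow_eq_rpow_div_two hπ.le, ← sqrt_pow_eq_rpow_div_two (div_nonneg hE hc.le)]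
        ring

theorem weyl_law_box_general (D : ℕ) (hD : 1 ≤ D) (ℏ m L : ℝ) (hℏ : 0 < ℏ) (hm : 0 < m)
    (hL : 0 < L) (s : ℝ) (hs : 0 ≤ s) :
    Tendsto (fun E : ℝ =>
      ((2 * s + 1) * (Nat.card {n : Fin D → ℕ+ //
          ℏ ^ 2 * Real.pi ^ 2 / (2 * m * L ^ 2) * ∑ i, ((n i : ℕ) : ℝ) ^ 2 ≤ E} : ℝ)) /
        ((2 * s + 1) *
          (1 / Real.Gamma ((D : ℝ) / 2 + 1) * (m / (2 * Real.pi * ℏ ^ 2)) ^ ((D : ℝ) / 2)) *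
          L ^ D * E ^ ((D : ℝ) / 2)))
      atTop (nhds 1) := by
  have : Nonempty (Fin D) := Fin.pos_iff_nonempty.mp hD
  set c := ℏ ^ 2 * π ^ 2 / (2 * m * L ^ 2)
  have hc : 0 < c := by positivity
  have hκ : √π ^ D / Gamma ((D : ℝ) / 2 + 1) / 2 ^ D ≠ 0 := by positivity
  have hradius : Tendsto (fun E => √(E / c)) atTop atTop :=
    tendsto_sqrt_atTop.comp (tendsto_id.atTop_div_const hc)
  have hlim := ((tendsto_card_pnat_sum_sq_le_div_pow (ι := Fin D)).comp hradius).div_const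
    (√π ^ D / Gamma ((D : ℝ) / 2 + 1) / 2 ^ D)
  simp only [Fintype.card_fin, div_self hκ] at hlim
  refine hlim.congr' ?_
  filter_upwards [eventually_gt_atTop 0] with E hE
  have hcard : Nat.card {n : Fin D → ℕ+ // c * ∑ i, ((n i : ℕ) : ℝ) ^ 2 ≤ E} =
      Nat.card {n : Fin D → ℕ+ | ∑ i, ((n i : ℕ) : ℝ) ^ 2 ≤ √(E / c) ^ 2} :=
    Nat.card_congr <| Equiv.subtypeEquivRight fun n => by
      rw [Set.mem_ofPred_eq, sq_sqrt (div_nonneg hE.le hc.le), le_div_iff₀ hc, mul_comm]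
  rw [Function.comp_apply, hcard, mul_assoc (2 * s + 1), mul_assoc (2 * s + 1),
    mul_div_mul_left _ _ (by linarith), weyl_leading_term_eq D hℏ hm hL hE.le]
  ring

/-- Weyl's law for a free spin-`s` particle of mass `m` in a `D`-dimensional cube of
side `L` with Dirichlet boundary conditions: the level counting function
`N(E) = (2s+1) · #{n ∈ (ℤ₊)^D : (ℏ²π²/(2mL²)) Σ nᵢ² ≤ E}` satisfies
`N(E) / ((2s+1) C_D V E^{D/2}) → 1` as `E → ∞`, with
`C_D = Γ(D/2+1)⁻¹ (m/(2πℏ²))^{D/2}` and `V = L^D`. -/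
theorem weyl_law_box (D : ℕ) (hD : 1 ≤ D) (ℏ m L : ℝ) (hℏ : 0 < ℏ) (hm : 0 < m)
    (hL : 0 < L) (s : ℝ) (hs : 0 ≤ s) (hs' : ∃ k : ℕ, s = (k : ℝ) / 2) :
    Tendsto (fun E : ℝ =>
      ((2 * s + 1) * (Nat.card {n : Fin D → ℕ+ //
          ℏ ^ 2 * Real.pi ^ 2 / (2 * m * L ^ 2) * ∑ i, ((n i : ℕ) : ℝ) ^ 2 ≤ E} : ℝ)) /
        ((2 * s + 1) *
          (1 / Real.Gamma ((D : ℝ) / 2 + 1) * (m / (2 * Real.pi * ℏ ^ 2)) ^ ((D : ℝ) / 2)) *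
          L ^ D * E ^ ((D : ℝ) / 2)))
      atTop (nhds 1) :=
  weyl_law_box_general D hD ℏ m L hℏ hm hL s hs
end

section
/- The special linear group SL(2, ℤ[i]) over the Gaussian integers is generated by the three matrices [[1, 1], [0, 1]], [[1, i], [0, 1]], and [[0, −1], [1, 0]]; that is, the subgroup of SL(2, ℤ[i]) generated (closed) by these three matrices is the whole group. -/
/-!
Euclid's algorithm in `SL(2, R)` for a Euclidean domain `R`. Write `T z` for
`upperTransvection z`, `L z` for `lowerTransvection z` and `S` for `inversion`. Left
multiplication by `S * T (-q)` with `q = a / c` replaces the first column `(a, c)` by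
`(-c, a % c)`, so by well-founded induction on the lower-left entry one reaches an upper
triangular matrix, which is a product of `T`'s, `L`'s and `S`, where
`L z = S * T (-z) * S⁻¹`. For `R = ℤ[i]`, each `T z` is `T 1 ^ re z * T i ^ im z`.
-/

open scoped MatrixGroups

namespace Matrix.SpecialLinearGroup

variable {R : Type*}

section CommRing

variable [CommRing R]

def upperTransvection (z : R) : SL(2, R) := ⟨!![1, z; 0, 1], by simp⟩

def lowerTransvection (z : R) : SL(2, R) := ⟨!![1, 0; z, 1], by simp⟩

def inversion : SL(2, R) := ⟨!![0, -1; 1, 0], by simp⟩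

@[simp]
lemma coe_upperTransvection (z : R) :
    (upperTransvection z : Matrix (Fin 2) (Fin 2) R) = !![1, z; 0, 1] := rfl

@[simp]
lemma coe_lowerTransvection (z : R) :
    (lowerTransvection z : Matrix (Fin 2) (Fin 2) R) = !![1, 0; z, 1] := rfl

@[simp]
lemma coe_inversion : ((inversion : SL(2, R)) : Matrix (Fin 2) (Fin 2) R) = !![0, -1; 1, 0] := rfl

@[simp]
lemma upperTransvection_zero : upperTransvection (0 : R) = 1 := by
  ext i j; fin_cases i <;> fin_cases j <;> simp

lemma upperTransvection_add (a b : R) :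
    upperTransvection (a + b) = upperTransvection a * upperTransvection b := by
  ext i j; fin_cases i <;> fin_cases j <;> simp [add_comm]

lemma upperTransvection_zsmul (n : ℤ) (a : R) :
    upperTransvection (n • a) = upperTransvection a ^ n := by
  induction n using Int.induction_on with
  | zero => simp
  | succ k ih => rw [add_smul, one_smul, upperTransvection_add, ih, _root_.zpow_add_one]
  | pred k ih =>
    rw [sub_smul, one_smul, _root_.zpow_sub_one, ← ih, eq_mul_inv_iff_mul_eq,
      ← upperTransvection_add, sub_add_cancel]

lemma lowerTransvection_eq_conj (z : R) :
    lowerTransvection z = inversion * upperTransvection (-z) * inversion⁻¹ := by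
  rw [eq_mul_inv_iff_mul_eq]
  ext i j; fin_cases i <;> fin_cases j <;> simp

/- `diag(a, d) = T a * L (-d) * T a * S` when `a * d = 1`, and `g = diag(a, d) * T (d * b)`. -/
lemma eq_of_apply_one_zero_eq_zero {g : SL(2, R)} (hg : g 1 0 = 0) :
    g = upperTransvection (g 0 0) * lowerTransvection (-g 1 1) * upperTransvection (g 0 0) *
      inversion * upperTransvection (g 1 1 * g 0 1) := by
  have hdet : g 0 0 * g 1 1 = 1 := by
    have := g.det_coe
    rwa [Matrix.det_fin_two, hg, mul_zero, sub_zero] at this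
  ext i j; fin_cases i <;> fin_cases j <;>
    simp [hg] <;> grind

lemma inversion_mul_upperTransvection_mul_apply_one_zero (q : R) (g : SL(2, R)) :
    (inversion * upperTransvection (-q) * g : SL(2, R)) 1 0 = g 0 0 - g 1 0 * q := by
  simp [Matrix.mul_apply, sub_eq_add_neg, mul_comm]

end CommRing

theorem closure_inversion_upperTransvection_eq_top (R : Type*) [EuclideanDomain R] :
    Subgroup.closure (insert inversion (Set.range (upperTransvection (R := R)))) = ⊤ := by
  set H : Subgroup SL(2, R) := Subgroup.closure (insert inversion (Set.range upperTransvection))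
  have inversion_mem : inversion ∈ H := Subgroup.subset_closure (Set.mem_insert _ _)
  have upper_mem (z : R) : upperTransvection z ∈ H :=
    Subgroup.subset_closure (Set.mem_insert_of_mem _ ⟨z, rfl⟩)
  have lower_mem (z : R) : lowerTransvection z ∈ H := by
    rw [lowerTransvection_eq_conj]
    exact H.mul_mem (H.mul_mem inversion_mem (upper_mem _)) (H.inv_mem inversion_mem)
  refine (Subgroup.eq_top_iff' H).2 fun g ↦ ?_
  induction g using (InvImage.wf (fun g : SL(2, R) ↦ g 1 0) EuclideanDomain.r_wellFounded).induction
    with | _ g ih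
  by_cases hc : g 1 0 = 0
  · rw [eq_of_apply_one_zero_eq_zero hc]
    exact H.mul_mem (H.mul_mem (H.mul_mem (H.mul_mem (upper_mem _) (lower_mem _))
      (upper_mem _)) inversion_mem) (upper_mem _)
  · set q := g 0 0 / g 1 0
    have hstep : inversion * upperTransvection (-q) * g ∈ H := by
      refine ih _ ?_
      have hlt := EuclideanDomain.mod_lt (g 0 0) hc
      rw [EuclideanDomain.mod_eq_sub_mul_div, ← inversion_mul_upperTransvection_mul_apply_one_zero]
        at hlt
      exact hlt
    simpa only [inv_mul_cancel_left] using
      H.mul_mem (H.inv_mem (H.mul_mem inversion_mem (upper_mem (-q)))) hstep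

end Matrix.SpecialLinearGroup

open Matrix.SpecialLinearGroup

/-- `SL(2, ℤ[i])` is generated by the matrices `[[1,1],[0,1]]`, `[[1,i],[0,1]]`,
and `[[0,−1],[1,0]]`, where `i = √(−1)` is the imaginary unit of the Gaussian
integers. -/
theorem SL2_GaussianInt_generators (A B C : Matrix.SpecialLinearGroup (Fin 2) GaussianInt)
    (hA : (A : Matrix (Fin 2) (Fin 2) GaussianInt) = !![1, 1; 0, 1])
    (hB : (B : Matrix (Fin 2) (Fin 2) GaussianInt) = !![1, Zsqrtd.sqrtd; 0, 1])
    (hC : (C : Matrix (Fin 2) (Fin 2) GaussianInt) = !![0, -1; 1, 0]) :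
    Subgroup.closure {A, B, C} = ⊤ := by
  have hA' : A = upperTransvection 1 := Subtype.ext hA
  have hB' : B = upperTransvection Zsqrtd.sqrtd := Subtype.ext hB
  have hC' : C = inversion := Subtype.ext hC
  rw [eq_top_iff, ← closure_inversion_upperTransvection_eq_top, Subgroup.closure_le,
    Set.insert_subset_iff]
  refine ⟨Subgroup.subset_closure (by simp [hC']), ?_⟩
  rintro _ ⟨z, rfl⟩
  have hz : z = z.re • 1 + z.im • Zsqrtd.sqrtd := by ext <;> simp
  rw [hz, upperTransvection_add, upperTransvection_zsmul, upperTransvection_zsmul, ← hA', ← hB']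
  exact mul_mem (zpow_mem (Subgroup.subset_closure (by simp)) _)
    (zpow_mem (Subgroup.subset_closure (by simp)) _)
end
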